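/- Let F₀ be a field, p ≥ 2 a prime number, F = F₀(a), and let F_n ∈ F[X₀, …, X_n] be defined recursively by F₁ = X₀^p + a·X₁^p and F_n = F_{n−1}^p + a^{t_n}·X_n^{p^n}, where t_n = (p^n − 1)/(p − 1). Then for every n ≥ 1 the polynomial F_n is irreducible in the polynomial ring F[X₀, …, X_n]. -/

import Mathlib

open MvPolynomial

/-- The recursively defined polynomials of Mohan Kumar's construction, over a commutative ring `K`
with a distinguished element `a`, with seed polynomial `f(X) = X^p + a`:
`F₁(X₀, X₁) = X₀^p + a·X₁^p` and
`Fₙ(X₀, …, Xₙ) = F_{n−1}(X₀, …, X_{n−1})^p + a^{tₙ}·Xₙ^{pⁿ}`,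
where `tₙ = 1 + p + ⋯ + p^{n−1} = (pⁿ − 1)/(p − 1)`.
`mohanKumarPoly K a p n` lives in `K[X₀, …, Xₙ] = MvPolynomial (Fin (n+1)) K`. -/
noncomputable def mohanKumarPoly (K : Type*) [CommRing K] (a : K) (p : ℕ) :
    (n : ℕ) → MvPolynomial (Fin (n + 1)) K
  | 0 => X 0
  | 1 => X 0 ^ p + C a * X 1 ^ p
  | (n + 2) =>
      (rename Fin.castSucc (mohanKumarPoly K a p (n + 1))) ^ p +
        C (a ^ (∑ i ∈ Finset.range (n + 2), p ^ i)) * X (Fin.last (n + 2)) ^ p ^ (n + 2)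

namespace MohanKumarAux

variable {K K' : Type*} [CommRing K] [CommRing K']

/-- Uniform recursion formula. -/
lemma mk_succ (a : K) (p : ℕ) (k : ℕ) :
    mohanKumarPoly K a p (k + 1) =
      (rename Fin.castSucc (mohanKumarPoly K a p k)) ^ p +
        C (a ^ (∑ i ∈ Finset.range (k + 1), p ^ i)) * X (Fin.last (k + 1)) ^ p ^ (k + 1) := by
  cases k with
  | zero =>
      show mohanKumarPoly K a p 1 = _
      rw [mohanKumarPoly, mohanKumarPoly]
      simp [Finset.sum_range_one]
  | succ k => rw [mohanKumarPoly]

lemma mk_map (φ : K →+* K') (a : K) (p : ℕ) : ∀ n,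
    map φ (mohanKumarPoly K a p n) = mohanKumarPoly K' (φ a) p n
  | 0 => by rw [mohanKumarPoly, mohanKumarPoly]; simp
  | 1 => by rw [mohanKumarPoly, mohanKumarPoly]; simp
  | (n + 2) => by
      rw [mohanKumarPoly, mohanKumarPoly]
      simp [MvPolynomial.map_rename, mk_map φ a p (n + 1)]

lemma mk_zero_ne_zero {K : Type*} [Field K] (p : ℕ) : ∀ n, mohanKumarPoly K (0 : K) p n ≠ 0
  | 0 => by rw [mohanKumarPoly]; exact MvPolynomial.X_ne_zero 0
  | (k + 1) => by
      rw [mk_succ]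
      have ht : (∑ i ∈ Finset.range (k + 1), p ^ i) ≠ 0 := by
        intro h
        have := Finset.sum_eq_zero_iff.mp h 0 (Finset.mem_range.mpr (Nat.succ_pos k))
        simp at this
      rw [zero_pow ht]
      simp only [map_zero, zero_mul, add_zero]
      exact pow_ne_zero _ fun h =>
        mk_zero_ne_zero p k ((MvPolynomial.rename_injective _ (Fin.castSucc_injective _))
          (by simpa using h))

lemma coprime_q_t {p : ℕ} (hp : p.Prime) (m : ℕ) :
    Nat.Coprime (p ^ (m + 1)) (∑ i ∈ Finset.range (m + 1), p ^ i) := by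
  have h : (∑ i ∈ Finset.range (m + 1), p ^ i) = 1 + (∑ i ∈ Finset.range m, p ^ i) * p := by
    rw [Finset.sum_range_succ']
    simp [pow_succ, Finset.sum_mul, add_comm]
  rw [h]
  apply Nat.Coprime.pow_left
  rw [Nat.coprime_add_mul_right_right p 1 _]
  exact Nat.coprime_one_right p

lemma pow_mul_eq_pow_mul {A : Type*} [CommRing A] [IsDomain A] {π u v : A} (hπ : Prime π)
    (hu : ¬ π ∣ u) (hv : ¬ π ∣ v) {e f : ℕ} (h : π ^ e * u = π ^ f * v) : e = f := by
  have key : ∀ {e f : ℕ} {u v : A}, ¬ π ∣ u → π ^ e * u = π ^ f * v → e < f → False := by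
    intro e f u v hu h hef
    have hf : f = e + (f - e) := by omega
    rw [hf, pow_add, mul_assoc] at h
    have := mul_left_cancel₀ (pow_ne_zero e hπ.ne_zero) h
    exact hu (this ▸ Dvd.dvd.mul_right (dvd_pow_self π (by omega : f - e ≠ 0)) v)
  rcases lt_trichotomy e f with hlt | heq | hgt
  · exact absurd (key hu h hlt) not_false
  · exact heq
  · exact absurd (key hv h.symm hgt) not_false

/-- Clearing denominators of a multivariate polynomial over `RatFunc F₀`. -/
lemma clear_denoms {F₀ : Type*} [Field F₀] {σ : Type*} (f : MvPolynomial σ (RatFunc F₀)) :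
    ∃ (d : Polynomial F₀) (g : MvPolynomial σ (Polynomial F₀)), d ≠ 0 ∧
      C (algebraMap (Polynomial F₀) (RatFunc F₀) d) * f =
        map (algebraMap (Polynomial F₀) (RatFunc F₀)) g := by
  induction f using MvPolynomial.induction_on with
  | C r =>
      obtain ⟨x, y, hy, hxy⟩ := IsFractionRing.div_surjective (A := Polynomial F₀) r
      refine ⟨y, C x, nonZeroDivisors.ne_zero hy, ?_⟩
      have hy0 : algebraMap (Polynomial F₀) (RatFunc F₀) y ≠ 0 :=
        IsFractionRing.to_map_ne_zero_of_mem_nonZeroDivisors hy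
      rw [map_C, ← map_mul]
      congr 1
      rw [← hxy, mul_div_cancel₀ _ hy0]
  | add f g hf hg =>
      obtain ⟨df, gf, hdf, hgf⟩ := hf
      obtain ⟨dg, gg, hdg, hgg⟩ := hg
      refine ⟨df * dg, C dg * gf + C df * gg, mul_ne_zero hdf hdg, ?_⟩
      have hC : (C (algebraMap (Polynomial F₀) (RatFunc F₀) (df * dg)) :
          MvPolynomial σ (RatFunc F₀)) =
          C (algebraMap (Polynomial F₀) (RatFunc F₀) df) *
            C (algebraMap (Polynomial F₀) (RatFunc F₀) dg) := by
        rw [map_mul, map_mul]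
      rw [hC, map_add, map_mul, map_mul, map_C, map_C, ← hgf, ← hgg]
      ring
  | mul_X f i hf =>
      obtain ⟨df, gf, hdf, hgf⟩ := hf
      refine ⟨df, gf * X i, hdf, ?_⟩
      rw [map_mul, MvPolynomial.map_X, ← mul_assoc, hgf]

/-- A norm-based irreducibility criterion for `X ^ n - C α`. -/
lemma irreducible_X_pow_sub_C_of {K : Type*} [Field K] {n : ℕ} (hn : 0 < n) {α : K}
    (H : ∀ k, 0 < k → k < n → ∀ b : K, b ^ n ≠ α ^ k) :
    Irreducible (Polynomial.X ^ n - Polynomial.C α) := by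
  have hQne : (Polynomial.X ^ n - Polynomial.C α : Polynomial K) ≠ 0 :=
    Polynomial.X_pow_sub_C_ne_zero hn α
  have hQu : ¬ IsUnit (Polynomial.X ^ n - Polynomial.C α : Polynomial K) := by
    rw [Polynomial.isUnit_iff_degree_eq_zero, Polynomial.degree_X_pow_sub_C hn]
    exact_mod_cast hn.ne'
  obtain ⟨g, hg, hdvd⟩ := WfDvdMonoid.exists_irreducible_factor hQu hQne
  suffices hdeg : g.natDegree = n by
    exact (Polynomial.associated_of_dvd_of_natDegree_le hdvd hQne
      (le_of_eq (Polynomial.natDegree_X_pow_sub_C.trans hdeg.symm))).irreducible hg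
  by_contra hne
  have hkle : g.natDegree ≤ n :=
    (Polynomial.natDegree_le_of_dvd hdvd hQne).trans_eq Polynomial.natDegree_X_pow_sub_C
  have hkpos : 0 < g.natDegree :=
    Polynomial.natDegree_pos_iff_degree_pos.mpr (Polynomial.degree_pos_of_irreducible hg)
  have : Fact (Irreducible g) := ⟨hg⟩
  have hroot : (AdjoinRoot.root g) ^ n = algebraMap K (AdjoinRoot g) α := by
    have := Polynomial.eval₂_eq_zero_of_dvd_of_eval₂_eq_zero _ _ hdvd (AdjoinRoot.eval₂_root g)
    rwa [Polynomial.eval₂_sub, Polynomial.eval₂_pow, Polynomial.eval₂_C, Polynomial.eval₂_X,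
      sub_eq_zero] at this
  have hfin : Module.finrank K (AdjoinRoot g) = g.natDegree := by
    simpa using (AdjoinRoot.powerBasis hg.ne_zero).finrank
  have key : (Algebra.norm K (AdjoinRoot.root g)) ^ n = α ^ g.natDegree := by
    rw [← map_pow, hroot, Algebra.norm_algebraMap, hfin]
  exact H _ hkpos (lt_of_le_of_ne hkle hne) _ key

lemma finSuccEquiv_rename_succ {R : Type*} [CommSemiring R] {n : ℕ}
    (f : MvPolynomial (Fin (n + 1)) R) :
    finSuccEquiv R (n + 1) (rename Fin.succ f) = Polynomial.C f := by
  induction f using MvPolynomial.induction_on with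
  | C r =>
      rw [rename_C]
      simp [finSuccEquiv_apply]
  | add f g hf hg => rw [map_add, map_add, hf, hg, map_add]
  | mul_X f i hf => rw [map_mul, rename_X, map_mul, hf, finSuccEquiv_X_succ, ← map_mul]

end MohanKumarAux

set_option maxHeartbeats 1600000
set_option synthInstance.maxHeartbeats 400000

/-- Let `F₀` be a field, `p ≥ 2` a prime number, `F = F₀(a)` (realized as
`RatFunc F₀`, with `a = RatFunc.X`), and let `Fₙ ∈ F[X₀, …, Xₙ]` be defined recursively by
`F₁ = X₀^p + a·X₁^p` and `Fₙ = F_{n−1}^p + a^{tₙ}·Xₙ^{pⁿ}`, where `tₙ = (pⁿ − 1)/(p − 1)`.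
Then for every `n ≥ 1` the polynomial `Fₙ` is irreducible in the polynomial ring
`F[X₀, …, Xₙ]`. -/
theorem mohanKumarPoly_irreducible (F₀ : Type*) [Field F₀] (p : ℕ) (hp : p.Prime)
    (n : ℕ) (hn : 1 ≤ n) :
    Irreducible (mohanKumarPoly (RatFunc F₀) RatFunc.X p n) := by
  classical
  obtain ⟨m, rfl⟩ : ∃ m, n = m + 1 := ⟨n - 1, by omega⟩
  let R := MvPolynomial (Fin (m + 1)) (RatFunc F₀)
  let L := FractionRing R
  set t : ℕ := ∑ i ∈ Finset.range (m + 1), p ^ i with ht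
  set q : ℕ := p ^ (m + 1) with hqd
  set Fm : R := mohanKumarPoly (RatFunc F₀) RatFunc.X p m with hFmd
  set Ft : MvPolynomial (Fin (m + 1)) (Polynomial F₀) :=
    mohanKumarPoly (Polynomial F₀) Polynomial.X p m with hFtd
  have hφinj : Function.Injective (algebraMap (Polynomial F₀) (RatFunc F₀)) :=
    IsFractionRing.injective (Polynomial F₀) (RatFunc F₀)
  have hq0 : q ≠ 0 := pow_ne_zero _ hp.ne_zero
  have ha0 : (RatFunc.X : RatFunc F₀) ≠ 0 := RatFunc.X_ne_zero
  have hc0 : (RatFunc.X ^ t : RatFunc F₀) ≠ 0 := pow_ne_zero _ ha0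
  have hψinj : Function.Injective
      (MvPolynomial.map (algebraMap (Polynomial F₀) (RatFunc F₀)) :
        MvPolynomial (Fin (m + 1)) (Polynomial F₀) → R) :=
    MvPolynomial.map_injective _ hφinj
  have hFt : MvPolynomial.map (algebraMap (Polynomial F₀) (RatFunc F₀)) Ft = Fm := by
    rw [hFtd, hFmd, MohanKumarAux.mk_map, RatFunc.algebraMap_X]
  have hπ : Prime (C Polynomial.X : MvPolynomial (Fin (m + 1)) (Polynomial F₀)) :=
    (MvPolynomial.prime_C_iff (Fin (m + 1))).mpr Polynomial.prime_X
  have hπFt : ¬ (C Polynomial.X : MvPolynomial (Fin (m + 1)) (Polynomial F₀)) ∣ Ft := by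
    rintro ⟨h, hh⟩
    have h0 : MvPolynomial.map (Polynomial.evalRingHom (0 : F₀)) Ft
        = mohanKumarPoly F₀ 0 p m := by
      rw [hFtd, MohanKumarAux.mk_map]
      simp
    rw [hh, map_mul, MvPolynomial.map_C] at h0
    simp only [Polynomial.coe_evalRingHom, Polynomial.eval_X, map_zero, zero_mul] at h0
    exact MohanKumarAux.mk_zero_ne_zero p m h0.symm
  have hFt0 : Ft ≠ 0 := fun h => hπFt (h ▸ dvd_zero _)
  have hFm0 : Fm ≠ 0 := by
    rw [← hFt]
    exact fun h => hFt0 (hψinj (by simpa using h))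
  -- the one-variable picture
  set P : Polynomial R :=
    (Polynomial.C Fm) ^ p + Polynomial.C ((C RatFunc.X : R) ^ t) * Polynomial.X ^ q with hPd
  have hE : (finSuccEquiv (RatFunc F₀) (m + 1))
      (rename (finRotate (m + 2)) (mohanKumarPoly (RatFunc F₀) RatFunc.X p (m + 1))) = P := by
    rw [MohanKumarAux.mk_succ, ← ht, ← hqd, ← hFmd]
    have hcomp : (⇑(finRotate (m + 2)) ∘ Fin.castSucc : Fin (m + 1) → Fin (m + 2))
        = Fin.succ := funext fun i => by
      rw [Function.comp_apply, finRotate_succ_apply, Fin.coeSucc_eq_succ]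
    have hCa : (finSuccEquiv (RatFunc F₀) (m + 1)) (C RatFunc.X) =
        Polynomial.C (C RatFunc.X) := by
      simp [finSuccEquiv_apply]
    simp only [map_add, map_pow, map_mul, rename_C, rename_X, rename_rename]
    rw [hcomp, finRotate_last]
    simp only [map_add, map_pow, map_mul, MohanKumarAux.finSuccEquiv_rename_succ,
      finSuccEquiv_X_zero, hCa]
    rw [hPd, Polynomial.C_pow]
  set r : R := C ((RatFunc.X ^ t)⁻¹) * Fm ^ p with hrd
  set Q : Polynomial R := Polynomial.X ^ q + Polynomial.C r with hQd
  have hCinv : (C ((RatFunc.X ^ t)⁻¹) * (C RatFunc.X : R) ^ t : R) = 1 := by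
    rw [← map_pow, ← map_mul, inv_mul_cancel₀ hc0, map_one]
  have hQP : Polynomial.C (C ((RatFunc.X ^ t)⁻¹) : R) * P = Q := by
    rw [hPd, hQd, hrd, mul_add, ← Polynomial.C_pow, ← Polynomial.C_mul, ← mul_assoc,
      ← Polynomial.C_mul, hCinv, Polynomial.C_1, one_mul]
    exact add_comm _ _
  have hCu : IsUnit (Polynomial.C (C ((RatFunc.X ^ t)⁻¹) : R)) :=
    ((Ne.isUnit (inv_ne_zero hc0)).map (C : RatFunc F₀ →+* R)).map
      (Polynomial.C : R →+* Polynomial R)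
  have hQmonic : Q.Monic := Polynomial.monic_X_pow_add_C _ hq0
  have hALinj : Function.Injective (algebraMap R L) := IsFractionRing.injective R L
  have hrne : (r : R) ≠ 0 := by
    rw [hrd]
    refine mul_ne_zero (fun h => inv_ne_zero hc0 ?_) (pow_ne_zero _ hFm0)
    exact MvPolynomial.C_injective (Fin (m + 1)) (RatFunc F₀) (h.trans (map_zero C).symm)
  have hrc : (r * (C RatFunc.X : R) ^ t : R) = Fm ^ p := by
    rw [hrd, mul_right_comm, hCinv, one_mul]
  have hIrrL : Irreducible (Q.map (algebraMap R L)) := by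
    have hQmap : Q.map (algebraMap R L) =
        Polynomial.X ^ q - Polynomial.C (-(algebraMap R L r)) := by
      rw [hQd, Polynomial.map_add, Polynomial.map_pow, Polynomial.map_X, Polynomial.map_C,
        map_neg, sub_neg_eq_add]
    rw [hQmap]
    apply MohanKumarAux.irreducible_X_pow_sub_C_of (Nat.pos_of_ne_zero hq0)
    intro k hk0 hkq b hb
    have hAr : algebraMap R L r ≠ 0 := fun h => hrne (hALinj (by simpa using h))
    have hb0 : b ≠ 0 := by
      intro h
      rw [h, zero_pow hq0] at hb
      exact (pow_ne_zero k (neg_ne_zero.mpr hAr)) hb.symm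
    obtain ⟨x, y, hy, hxy⟩ := IsFractionRing.div_surjective (A := R) b
    have hy0 : y ≠ 0 := nonZeroDivisors.ne_zero hy
    have hAy : algebraMap R L y ≠ 0 := fun h => hy0 (hALinj (by simpa using h))
    have hx0 : x ≠ 0 := by
      intro h
      rw [h, map_zero, zero_div] at hxy
      exact hb0 hxy.symm
    have hxb : algebraMap R L x = b * algebraMap R L y := by
      rw [← hxy, div_mul_cancel₀ _ hAy]
    have hEqL : (algebraMap R L) (x ^ q * ((C RatFunc.X : R) ^ t) ^ k) =
        (algebraMap R L) ((-1) ^ k * (Fm ^ p) ^ k * y ^ q) := by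
      have h1 : (algebraMap R L x) ^ q =
          (-(algebraMap R L r)) ^ k * (algebraMap R L y) ^ q := by
        rw [hxb, mul_pow, hb]
      have h2 : (-(algebraMap R L r)) * (algebraMap R L ((C RatFunc.X : R) ^ t)) =
          -(algebraMap R L (Fm ^ p)) := by
        rw [neg_mul, ← map_mul, hrc]
      calc (algebraMap R L) (x ^ q * ((C RatFunc.X : R) ^ t) ^ k)
          = (algebraMap R L x) ^ q * (algebraMap R L ((C RatFunc.X : R) ^ t)) ^ k := by
            rw [map_mul, map_pow, map_pow]
        _ = ((-(algebraMap R L r)) * (algebraMap R L ((C RatFunc.X : R) ^ t))) ^ k *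
              (algebraMap R L y) ^ q := by rw [h1, mul_pow]; ring
        _ = (-(algebraMap R L (Fm ^ p))) ^ k * (algebraMap R L y) ^ q := by rw [h2]
        _ = _ := by
            rw [neg_pow]
            simp only [map_mul, map_pow, map_neg, map_one]
            try ring
    have hEqR : x ^ q * ((C RatFunc.X : R) ^ t) ^ k = (-1) ^ k * (Fm ^ p) ^ k * y ^ q :=
      hALinj hEqL
    obtain ⟨dx, gx, hdx, hgx⟩ := MohanKumarAux.clear_denoms (F₀ := F₀) x
    obtain ⟨dy, gy, hdy, hgy⟩ := MohanKumarAux.clear_denoms (F₀ := F₀) y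
    have hEqA : gx ^ q * ((C Polynomial.X :
          MvPolynomial (Fin (m + 1)) (Polynomial F₀)) ^ t) ^ k * (C dy) ^ q =
        (-1) ^ k * (Ft ^ p) ^ k * gy ^ q * (C dx) ^ q := by
      apply hψinj
      simp only [map_mul, map_pow, map_neg, map_one, MvPolynomial.map_C, hFt,
        RatFunc.algebraMap_X]
      rw [← hgx, ← hgy]
      linear_combination (C (algebraMap (Polynomial F₀) (RatFunc F₀) dx) ^ q *
        C (algebraMap (Polynomial F₀) (RatFunc F₀) dy) ^ q :
          MvPolynomial (Fin (m + 1)) (RatFunc F₀)) * hEqR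
    -- multiplicity count at the prime `C Polynomial.X`
    have hCne : ∀ z : Polynomial F₀, z ≠ 0 →
        (C z : MvPolynomial (Fin (m + 1)) (Polynomial F₀)) ≠ 0 :=
      fun z hz h => hz (MvPolynomial.C_injective (Fin (m + 1)) (Polynomial F₀)
        (h.trans (map_zero C).symm))
    have hCzero : ∀ w : RatFunc F₀, (C w : R) = 0 → w = 0 := fun w hw =>
      MvPolynomial.C_injective (Fin (m + 1)) (RatFunc F₀) (hw.trans (map_zero C).symm)
    have hgx0 : gx ≠ 0 := by
      intro h
      rw [h, map_zero] at hgx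
      rcases mul_eq_zero.mp hgx with h' | h'
      · exact hdx (hφinj (by simpa using hCzero _ h'))
      · exact hx0 h'
    have hgy0 : gy ≠ 0 := by
      intro h
      rw [h, map_zero] at hgy
      rcases mul_eq_zero.mp hgy with h' | h'
      · exact hdy (hφinj (by simpa using hCzero _ h'))
      · exact hy0 h'
    obtain ⟨e₁, u₁, hu₁, hgxd⟩ := WfDvdMonoid.max_power_factor hgx0 hπ.irreducible
    obtain ⟨e₂, u₂, hu₂, hgyd⟩ := WfDvdMonoid.max_power_factor hgy0 hπ.irreducible
    obtain ⟨e₃, u₃, hu₃, hdxd⟩ := WfDvdMonoid.max_power_factor (hCne dx hdx) hπ.irreducible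
    obtain ⟨e₄, u₄, hu₄, hdyd⟩ := WfDvdMonoid.max_power_factor (hCne dy hdy) hπ.irreducible
    have hExp : e₁ * q + (t * k + e₄ * q) = (e₂ * q + e₃ * q) := by
      apply MohanKumarAux.pow_mul_eq_pow_mul hπ
        (u := u₁ ^ q * u₄ ^ q) (v := (-1) ^ k * (Ft ^ p) ^ k * (u₂ ^ q * u₃ ^ q))
      · intro hdvd
        rcases (hπ.dvd_mul).mp hdvd with h' | h'
        · exact hu₁ (hπ.dvd_of_dvd_pow h')
        · exact hu₄ (hπ.dvd_of_dvd_pow h')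
      · intro hdvd
        rcases (hπ.dvd_mul).mp hdvd with h' | h'
        · rcases (hπ.dvd_mul).mp h' with h'' | h''
          · exact hπ.not_isUnit (isUnit_of_dvd_unit h''
              ((isUnit_one (M := MvPolynomial (Fin (m + 1)) (Polynomial F₀))).neg.pow k))
          · exact hπFt (hπ.dvd_of_dvd_pow (hπ.dvd_of_dvd_pow h''))
        · rcases (hπ.dvd_mul).mp h' with h'' | h''
          · exact hu₂ (hπ.dvd_of_dvd_pow h'')
          · exact hu₃ (hπ.dvd_of_dvd_pow h'')
      · calc (C Polynomial.X : MvPolynomial (Fin (m + 1)) (Polynomial F₀)) ^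
              (e₁ * q + (t * k + e₄ * q)) * (u₁ ^ q * u₄ ^ q)
            = gx ^ q * ((C Polynomial.X :
                MvPolynomial (Fin (m + 1)) (Polynomial F₀)) ^ t) ^ k * (C dy) ^ q := by
              rw [hgxd, hdyd]; ring
          _ = (-1) ^ k * (Ft ^ p) ^ k * gy ^ q * (C dx) ^ q := hEqA
          _ = _ := by rw [hgyd, hdxd]; ring
    have hqdvd : q ∣ t * k := by
      have hcast : (e₁ : ℤ) * q + (t * k + e₄ * q) = e₂ * q + e₃ * q := by
        exact_mod_cast congrArg (Nat.cast : ℕ → ℤ) hExp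
      have : (q : ℤ) ∣ (t * k : ℤ) := ⟨(e₂ : ℤ) + e₃ - e₁ - e₄, by linarith⟩
      exact_mod_cast this
    have hqk : q ∣ k := by
      exact (MohanKumarAux.coprime_q_t hp m).dvd_of_dvd_mul_left hqdvd
    exact absurd (Nat.le_of_dvd hk0 hqk) (not_le.mpr hkq)
  have hIrrQ : Irreducible Q := hQmonic.irreducible_iff_irreducible_map_fraction_map.mpr hIrrL
  have hIrrP : Irreducible P := by
    obtain ⟨u, hu⟩ := hCu
    have hassoc : Associated P Q := ⟨u, by rw [hu, mul_comm]; exact hQP⟩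
    exact hassoc.symm.irreducible hIrrQ
  have h1 : Irreducible
      (rename (finRotate (m + 2)) (mohanKumarPoly (RatFunc F₀) RatFunc.X p (m + 1))) :=
    (MulEquiv.irreducible_iff (finSuccEquiv (RatFunc F₀) (m + 1))).mp (hE ▸ hIrrP)
  have h2 : (rename (finRotate (m + 2)) (mohanKumarPoly (RatFunc F₀) RatFunc.X p (m + 1)))
      = (renameEquiv (RatFunc F₀) (finRotate (m + 2)))
          (mohanKumarPoly (RatFunc F₀) RatFunc.X p (m + 1)) := rfl
  rw [h2] at h1
  exact (MulEquiv.irreducible_iff (renameEquiv (RatFunc F₀) (finRotate (m + 2)))).mp h1
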